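/- Let k be a field of characteristic 0 and let n, r, s be nonnegative integers with r + s ≤ n. In the Laurent polynomial ring k[x_1^{±1}, …, x_n^{±1}], the family of r + s elements p_1^+, …, p_r^+, p_1^−, …, p_s^−, where p_m^+ := x_1^m + ⋯ + x_n^m and p_m^− := x_1^{−m} + ⋯ + x_n^{−m}, is algebraically independent over k. -/

import Mathlib

/-!
Jacobian criterion: over a field of characteristic `0`, elements `f₁, …, fₘ` of a domain are
algebraically independent as soon as some derivations `D₁, …, Dₘ` make `det (Dᵢ fⱼ)` nonzero.
Indeed, for a relation `P(f) = 0` of minimal degree the chain rule turns the relations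
`Dᵢ (P(f)) = 0` into a nonsingular linear system for the `(∂ⱼP)(f)`, so these vanish, every
`∂ⱼP` is zero by minimality, and `P` is constant.

For power sums `p_{a₁}, …, p_{aₘ}` with distinct nonzero exponents and `m ≤ n`, take
`Dᵢ = xᵢ ∂/∂xᵢ`. Then `Dᵢ p_a = a xᵢ^a`, and `det (aⱼ xᵢ^{aⱼ})` is nonzero because the terms of
its permutation expansion are distinct monomials.
-/

noncomputable section

/-- The Laurent polynomial ring `k[x_1^{±1}, …, x_n^{±1}]`: the group algebra over `k`
of the free abelian group `ℤ^n`. -/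
abbrev LaurentRing (k : Type*) [Field k] (n : ℕ) : Type _ :=
  AddMonoidAlgebra k (Fin n → ℤ)

/-- The standard invertible generator `x_i` of the Laurent polynomial ring, as a unit. -/
def xgen (k : Type*) [Field k] (n : ℕ) (i : Fin n) : (LaurentRing k n)ˣ where
  val := AddMonoidAlgebra.single (Pi.single i (1 : ℤ)) (1 : k)
  inv := AddMonoidAlgebra.single (Pi.single i (-1 : ℤ)) (1 : k)
  val_inv := by
    rw [AddMonoidAlgebra.single_mul_single, AddMonoidAlgebra.one_def]
    congr 1
    · ext l; by_cases h : l = i <;> simp [h]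
    · exact one_mul 1
  inv_val := by
    rw [AddMonoidAlgebra.single_mul_single, AddMonoidAlgebra.one_def]
    congr 1
    · ext l; by_cases h : l = i <;> simp [h]
    · exact one_mul 1

/-- The power sum `p_m = x_1^m + ⋯ + x_n^m` (for `m ∈ ℤ`), so that `p_m^+ = p_m` and
`p_m^− = p_{−m}` for `m ≥ 1`. -/
def powerSumL (k : Type*) [Field k] (n : ℕ) (m : ℤ) : LaurentRing k n :=
  ∑ i : Fin n, ((xgen k n i ^ m : (LaurentRing k n)ˣ) : LaurentRing k n)

namespace MvPolynomial

variable {σ R : Type*} [CommSemiring R]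

theorem totalDegree_pderiv_lt {p : MvPolynomial σ R} {i : σ} (h : pderiv i p ≠ 0) :
    (pderiv i p).totalDegree < p.totalDegree := by
  obtain ⟨m, hm, hdeg⟩ := Finset.exists_mem_eq_sup _ (support_nonempty.mpr h)
    fun s => s.sum fun _ e => e
  have hcoeff : coeff (m + Finsupp.single i 1) p ≠ 0 :=
    left_ne_zero_of_mul (coeff_pderiv (i := i) p m ▸ mem_support_iff.mp hm)
  have := le_totalDegree (mem_support_iff.mpr hcoeff)
  rw [Finsupp.sum_add_index' (fun _ => rfl) (fun _ _ _ => rfl), Finsupp.sum_single_index rfl]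
    at this
  rw [totalDegree, hdeg]
  omega

theorem eq_C_of_forall_pderiv_eq_zero [NoZeroDivisors R] [CharZero R] {p : MvPolynomial σ R}
    (h : ∀ i, pderiv i p = 0) : p = C (coeff 0 p) := by
  classical
  ext m
  rw [coeff_C]
  split_ifs with hm
  · rw [hm]
  obtain ⟨i, hi⟩ : ∃ i, m i ≠ 0 := by
    by_contra! hzero
    exact hm (Finsupp.ext hzero).symm
  have hsplit : m = (m - Finsupp.single i 1) + Finsupp.single i 1 := by
    ext j
    by_cases hj : j = i
    · simp [hj]; omega
    · simp [hj]
  have := coeff_pderiv (i := i) p (m - Finsupp.single i 1)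
  rw [h i, coeff_zero, ← hsplit] at this
  exact (mul_eq_zero.mp this.symm).resolve_right (Nat.cast_add_one_ne_zero _)

end MvPolynomial

theorem Derivation.map_aeval_mvPolynomial {ι R A : Type*} [Fintype ι] [DecidableEq ι]
    [CommSemiring R] [CommSemiring A] [Algebra R A] (D : Derivation R A A) (f : ι → A)
    (p : MvPolynomial ι R) :
    D (MvPolynomial.aeval f p) = ∑ j, MvPolynomial.aeval f (MvPolynomial.pderiv j p) * D (f j) := by
  induction p using MvPolynomial.induction_on with
  | C c => simp
  | add p q hp hq => simp [hp, hq, add_mul, Finset.sum_add_distrib]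
  | mul_X p j hp =>
    simp only [map_mul, MvPolynomial.aeval_X, Derivation.leibniz, smul_eq_mul, hp,
      MvPolynomial.pderiv_X, map_add, add_mul, Finset.sum_add_distrib, Pi.single_apply,
      Finset.mul_sum]
    simp [mul_comm, mul_left_comm]

section JacobianCriterion

open MvPolynomial

variable {ι k A : Type*} [Fintype ι] [DecidableEq ι] [Field k] [CommRing A] [IsDomain A]
  [Algebra k A] {D : ι → Derivation k A A} {f : ι → A}

theorem aeval_pderiv_eq_zero_of_det_ne_zero (hD : (Matrix.of fun i j => D i (f j)).det ≠ 0)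
    {p : MvPolynomial ι k} (hp : aeval f p = 0) (j : ι) : aeval f (pderiv j p) = 0 := by
  have hmulVec : (Matrix.of fun i j => D i (f j)).mulVec (fun j => aeval f (pderiv j p)) = 0 := by
    funext i
    simp only [Matrix.mulVec, dotProduct, Matrix.of_apply, Pi.zero_apply]
    simp_rw [mul_comm (D i _), ← Derivation.map_aeval_mvPolynomial, hp, map_zero]
  exact congrFun (Matrix.eq_zero_of_mulVec_eq_zero hD hmulVec) j

theorem algebraicIndependent_of_det_derivation_ne_zero [CharZero k]
    (hD : (Matrix.of fun i j => D i (f j)).det ≠ 0) : AlgebraicIndependent k f := by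
  refine algebraicIndependent_iff.mpr fun p hp => ?_
  induction hd : p.totalDegree using Nat.strong_induction_on generalizing p with
  | _ d ih =>
    have hpderiv (j : ι) : pderiv j p = 0 := by
      by_contra hne
      exact hne (ih _ (hd ▸ totalDegree_pderiv_lt hne) _
        (aeval_pderiv_eq_zero_of_det_ne_zero hD hp j) rfl)
    rw [eq_C_of_forall_pderiv_eq_zero hpderiv, aeval_C,
      map_eq_zero_iff _ (algebraMap k A).injective] at hp
    rw [eq_C_of_forall_pderiv_eq_zero hpderiv, hp, map_zero]

end JacobianCriterion

namespace AddMonoidAlgebra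

variable {k M : Type*} [CommRing k] [AddCommMonoid M]

theorem basis_constr_single {N : Type*} [AddCommMonoid N] [Module k N] (g : M → N) (m : M)
    (c : k) : (basis M k).constr k g (single m c) = c • g m := by
  rw [show single m c = c • basis M k m by simp [smul_single], map_smul,
    Module.Basis.constr_basis]

def weightDerivation (φ : M →+ k) : Derivation k (AddMonoidAlgebra k M) (AddMonoidAlgebra k M) :=
  Derivation.mk' ((basis M k).constr k fun m => single m (φ m)) fun x y => by
    induction x using induction_linear with
    | zero => simp
    | add x x' hx hx' => simp only [add_mul, map_add, hx, hx', add_smul, smul_add]; abel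
    | single a c =>
      induction y using induction_linear with
      | zero => simp
      | add y y' hy hy' => simp only [mul_add, map_add, hy, hy', add_smul, smul_add]; abel
      | single b d =>
        simp only [single_mul_single, basis_constr_single, smul_single, smul_eq_mul, map_add]
        rw [add_comm b a, ← single_add]
        ring_nf

theorem weightDerivation_single (φ : M →+ k) (m : M) (c : k) :
    weightDerivation φ (single m c) = single m (φ m * c) := by
  simp [weightDerivation, basis_constr_single, smul_single, mul_comm]

theorem det_single_piSingle_ne_zero [IsDomain k] {ι σ G : Type*} [Fintype ι] [DecidableEq ι]
    [DecidableEq σ] [AddCommMonoid G] {e : ι → σ} (he : e.Injective) {a : ι → G}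
    (ha : a.Injective) {c : ι → k} (hc : ∀ q, c q ≠ 0) :
    (Matrix.of fun p q => (single (Pi.single (e p) (a q)) (c q) : AddMonoidAlgebra k (σ → G))).det
      ≠ 0 := by
  -- `w π` is the exponent of the term of `π` in the Leibniz expansion of the determinant.
  set w : Equiv.Perm ι → σ → G := fun π => ∑ i, Pi.single (e (π i)) (a i)
  have hw_apply (π : Equiv.Perm ι) (p : ι) : w π (e p) = a (π.symm p) := by
    simp [w, Finset.sum_apply, Pi.single_apply, he.eq_iff, ← Equiv.symm_apply_eq]
  have hw : w.Injective := fun π τ h =>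
    Equiv.symm_bijective.injective <| Equiv.ext fun p => ha <| by rw [← hw_apply, ← hw_apply, h]
  have hdet : (Matrix.of fun p q =>
      (single (Pi.single (e p) (a q)) (c q) : AddMonoidAlgebra k (σ → G))).det =
      ∑ π, ((Equiv.Perm.sign π : ℤ) * ∏ i, c i : k) • basis (σ → G) k (w π) := by
    simp [Matrix.det_apply, prod_single, Units.smul_def, w]
  rw [hdet]
  intro h
  simpa [Finset.prod_eq_zero_iff, hc] using
    Fintype.linearIndependent_iff.mp ((basis _ k).linearIndependent.comp w hw) _ h 1

end AddMonoidAlgebra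

section Laurent

open AddMonoidAlgebra

variable (k : Type*) [Field k] {n : ℕ}

theorem coe_xgen_zpow (i : Fin n) (m : ℤ) :
    ((xgen k n i ^ m : (LaurentRing k n)ˣ) : LaurentRing k n) = single (Pi.single i m) 1 := by
  have hx : xgen k n i = (of k (Fin n → ℤ)).toHomUnits (Multiplicative.ofAdd (Pi.single i 1)) :=
    Units.ext rfl
  rw [hx, ← map_zpow, ← ofAdd_zsmul, ← Pi.single_smul, smul_eq_mul, mul_one]
  rfl

theorem powerSumL_eq_sum_single (m : ℤ) :
    powerSumL k n m = ∑ i, single (Pi.single i m) 1 := by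
  simp only [powerSumL, coe_xgen_zpow]

def eulerDerivation (i : Fin n) : Derivation k (LaurentRing k n) (LaurentRing k n) :=
  weightDerivation ((Int.castAddHom k).comp (Pi.evalAddMonoidHom (fun _ => ℤ) i))

theorem eulerDerivation_powerSumL (i : Fin n) (m : ℤ) :
    eulerDerivation k i (powerSumL k n m) = single (Pi.single i m) (m : k) := by
  rw [powerSumL_eq_sum_single, map_sum, Finset.sum_eq_single i]
  · simp [eulerDerivation, weightDerivation_single]
  · intro j _ hj
    simp [eulerDerivation, weightDerivation_single, Ne.symm hj]
  · simp

theorem algebraicIndependent_powerSumL [CharZero k] {ι : Type*} [Fintype ι]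
    (hι : Fintype.card ι ≤ n) {a : ι → ℤ} (ha : a.Injective) (ha₀ : ∀ q, a q ≠ 0) :
    AlgebraicIndependent k fun q => powerSumL k n (a q) := by
  classical
  obtain ⟨e⟩ := Function.Embedding.nonempty_of_card_le (hι.trans (Fintype.card_fin n).ge)
  refine algebraicIndependent_of_det_derivation_ne_zero (D := fun p => eulerDerivation k (e p)) ?_
  have hdet := det_single_piSingle_ne_zero e.injective ha (c := fun q => (a q : k))
    (fun q => Int.cast_ne_zero.mpr (ha₀ q))
  convert hdet using 3
  funext p q
  exact eulerDerivation_powerSumL k (e p) (a q)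

end Laurent

theorem powerSums_algebraicIndependent
    (k : Type*) [Field k] [CharZero k] (n r s : ℕ) (hrs : r + s ≤ n) :
    AlgebraicIndependent k
      (Sum.elim (fun a : Fin r => powerSumL k n ((a : ℕ) + 1))
        (fun b : Fin s => powerSumL k n (-((b : ℕ) + 1)))) := by
  set a : Fin r ⊕ Fin s → ℤ := Sum.elim (fun i => (i : ℕ) + 1) fun j => -((j : ℕ) + 1)
  have ha : a.Injective := by
    refine .sumElim (fun _ _ h => Fin.ext ?_) (fun _ _ h => Fin.ext ?_) fun _ _ h => ?_ <;> omega
  have ha₀ (q : Fin r ⊕ Fin s) : a q ≠ 0 := by cases q <;> simp [a] <;> omega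
  have hcard : Fintype.card (Fin r ⊕ Fin s) ≤ n := by simpa using hrs
  simpa [a, ← Function.comp_def, Sum.comp_elim] using algebraicIndependent_powerSumL k hcard ha ha₀
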